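/- Let 0 < p < 1. There is a constant c_p such that for every p-atom a on G = (Z/2)^ℕ (supported on I_N, ‖a‖_∞ ≤ 2^{N/p}, mean zero), ∫_{G \ I_N} sup_{n∈ℕ} ( |S_n a(x)| / (n+1)^{1/p − 1} )^p dμ(x) ≤ c_p. -/

import Mathlib

/-!
For `x ∉ I_N` let `s < N` be the first coordinate with `x s ≠ 0`. Since
`S_n a(x) = ∫ a(t) D_n(x + t) dt` and `(x + t) s = x s` for `t ∈ I_N`, it suffices to bound the
Dirichlet kernel at points `y` with `y s ≠ 0`: there `D_{2^{s+1}}(y) = ∏_{i ≤ s} (1 + r_i(y)) = 0`,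
and the Walsh functions factor over blocks of length `2^{s+1}`, so all complete blocks of `D_n(y)`
cancel and `|D_n(y)| ≤ 2^{s+1}`. Hence `|S_n a(x)| ≤ 2^{s+1} ‖a‖₁ ≤ 2^{s+1} (2^N)^{1/p-1}`, while
`S_n a = 0` for `n ≤ 2^N`; so the weight `(n+1)^{1/p-1}` absorbs the second factor and the maximal
function is at most `2^{s+1}` on `I_s \ I_{s+1}`, a set of measure at most `2^{-s}`. Summing
`2^{(s+1)p} 2^{-s}` over `s` gives a geometric series with ratio `2^{p-1} < 1`.
-/

open MeasureTheory ENNReal Filter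
open scoped Classical

noncomputable section

instance : TopologicalSpace (ZMod 2) := ⊥
instance : DiscreteTopology (ZMod 2) := ⟨rfl⟩
instance : MeasurableSpace (ZMod 2) := ⊤
instance : BorelSpace (ZMod 2) := ⟨borel_eq_top_of_discrete.symm⟩
instance : IsTopologicalAddGroup (ZMod 2) where
  continuous_add := continuous_of_discreteTopology
  continuous_neg := continuous_of_discreteTopology

/-- The dyadic group `G = (ℤ/2)^ℕ`. -/
abbrev G2 : Type := ℕ → ZMod 2

/-- Normalized Haar (probability) measure on `G2`. -/
def muG : Measure G2 :=
  Measure.addHaarMeasure ⟨⟨Set.univ, isCompact_univ⟩, by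
    rw [interior_univ]; exact Set.univ_nonempty⟩

/-- Rademacher functions. -/
def rad (k : ℕ) (x : G2) : ℝ := (-1 : ℝ) ^ ((x k).val)

/-- Walsh–Paley functions. -/
def walsh (n : ℕ) (x : G2) : ℝ :=
  ∏ k ∈ Finset.range n, if n.testBit k then rad k x else 1

/-- Walsh–Dirichlet kernels. -/
def dirichlet (n : ℕ) (x : G2) : ℝ := ∑ k ∈ Finset.range n, walsh k x

/-- The cylinder sets `I_n`. -/
def cyl (n : ℕ) : Set G2 := {x | ∀ i < n, x i = 0}

/-- Walsh–Fourier coefficients. -/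
def fhat (f : G2 → ℝ) (k : ℕ) : ℝ := ∫ x, f x * walsh k x ∂muG

/-- Walsh–Fourier partial sums of a function. -/
def funS (f : G2 → ℝ) (n : ℕ) (x : G2) : ℝ :=
  ∑ k ∈ Finset.range n, fhat f k * walsh k x

/-- Partial sums of the Walsh series of a dyadic martingale given by coefficients `c`. -/
def mS (c : ℕ → ℝ) (n : ℕ) (x : G2) : ℝ := ∑ k ∈ Finset.range n, c k * walsh k x

/-- The martingale maximal function. -/
def mMax (c : ℕ → ℝ) (x : G2) : ℝ≥0∞ := ⨆ n : ℕ, (‖mS c (2 ^ n) x‖₊ : ℝ≥0∞)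

/-- The martingale Hardy space quasi-norm `H_p`. -/
def mHp (p : ℝ) (c : ℕ → ℝ) : ℝ≥0∞ := (∫⁻ x, (mMax c x) ^ p ∂muG) ^ (1 / p)

/-- The maximal function of an integrable function. -/
def funMax (f : G2 → ℝ) (x : G2) : ℝ≥0∞ := ⨆ n : ℕ, (‖funS f (2 ^ n) x‖₊ : ℝ≥0∞)

/-- The Hardy space quasi-norm of an integrable function. -/
def funHp (p : ℝ) (f : G2 → ℝ) : ℝ≥0∞ := (∫⁻ x, (funMax f x) ^ p ∂muG) ^ (1 / p)

/-- Weak `L^p` quasi-norm. -/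
def weakLp (p : ℝ) (f : G2 → ℝ) : ℝ≥0∞ :=
  ⨆ t : NNReal, (t : ℝ≥0∞) * (muG {x | (t : ℝ) < |f x|}) ^ (1 / p)

section Walsh

lemma zmod_two_eq_zero_or_one (a : ZMod 2) : a = 0 ∨ a = 1 := by
  revert a; decide

lemma abs_rad (k : ℕ) (x : G2) : |rad k x| = 1 := by
  simp [rad]

lemma rad_of_eq_zero {k : ℕ} {x : G2} (h : x k = 0) : rad k x = 1 := by
  simp [rad, h]

lemma rad_of_ne_zero {k : ℕ} {x : G2} (h : x k ≠ 0) : rad k x = -1 := by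
  simp [rad, (zmod_two_eq_zero_or_one _).resolve_left h, ZMod.val_one]

lemma rad_add (k : ℕ) (x y : G2) : rad k (x + y) = rad k x * rad k y := by
  simp only [rad, Pi.add_apply, ZMod.val_add, ← neg_one_pow_eq_pow_mod_two, pow_add]

lemma abs_walsh (n : ℕ) (x : G2) : |walsh n x| = 1 := by
  simp [walsh, Finset.abs_prod, apply_ite, abs_rad]

lemma walsh_add (n : ℕ) (x y : G2) : walsh n (x + y) = walsh n x * walsh n y := by
  simp only [walsh, ← Finset.prod_mul_distrib]
  refine Finset.prod_congr rfl fun k _ => ?_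
  split_ifs
  · exact rad_add k x y
  · rw [mul_one]

lemma walsh_eq_prod_range {n B : ℕ} (hB : n ≤ B) (x : G2) :
    walsh n x = ∏ k ∈ Finset.range B, if n.testBit k then rad k x else 1 := by
  refine Finset.prod_subset (Finset.range_subset_range.2 hB) fun k _ hk => ?_
  have : n < 2 ^ k := (Nat.not_lt.mp (Finset.mem_range.not.mp hk)).trans_lt Nat.lt_two_pow_self
  rw [Nat.testBit_lt_two_pow this, if_neg Bool.false_ne_true]

lemma walsh_eq_one_of_mem_cyl {k N : ℕ} (hk : k < 2 ^ N) {t : G2} (ht : t ∈ cyl N) :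
    walsh k t = 1 := by
  refine Finset.prod_eq_one fun i _ => ?_
  split_ifs with h
  · have : 2 ^ i < 2 ^ N := (Nat.ge_two_pow_of_testBit h).trans_lt hk
    exact rad_of_eq_zero (ht i ((Nat.pow_lt_pow_iff_right (by norm_num)).mp this))
  · rfl

lemma walsh_two_pow (m : ℕ) (x : G2) : walsh (2 ^ m) x = rad m x := by
  rw [walsh, Finset.prod_eq_single_of_mem m (Finset.mem_range.2 Nat.lt_two_pow_self)]
  · simp [Nat.testBit_two_pow_self]
  · intro i _ hi
    simp [Nat.testBit_two_pow_of_ne (Ne.symm hi)]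

lemma walsh_two_pow_mul_add (m q : ℕ) {r : ℕ} (hr : r < 2 ^ m) (x : G2) :
    walsh (2 ^ m * q + r) x = walsh (2 ^ m * q) x * walsh r x := by
  rw [walsh_eq_prod_range le_rfl, walsh_eq_prod_range (Nat.le_add_right _ r),
    walsh_eq_prod_range (Nat.le_add_left r _), ← Finset.prod_mul_distrib]
  refine Finset.prod_congr rfl fun k _ => ?_
  rw [Nat.testBit_two_pow_mul_add q hr k, Nat.testBit_two_pow_mul]
  by_cases hkm : k < m
  · simp [hkm, Nat.not_le.2 hkm]
  · have : r.testBit k = false :=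
      Nat.testBit_lt_two_pow (hr.trans_le (Nat.pow_le_pow_right two_pos (Nat.not_lt.mp hkm)))
    simp [hkm, Nat.not_lt.mp hkm, this]

lemma dirichlet_two_pow (m : ℕ) (x : G2) :
    dirichlet (2 ^ m) x = ∏ i ∈ Finset.range m, (1 + rad i x) := by
  induction m with
  | zero => simp [dirichlet, walsh]
  | succ m ih =>
    have hupper : ∀ r ∈ Finset.range (2 ^ m), walsh (2 ^ m + r) x = rad m x * walsh r x :=
      fun r hr => by
        simpa [walsh_two_pow] using walsh_two_pow_mul_add m 1 (Finset.mem_range.1 hr) x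
    rw [dirichlet, pow_succ, mul_two, Finset.sum_range_add, Finset.sum_congr rfl hupper,
      ← Finset.mul_sum, ← dirichlet, ih, Finset.prod_range_succ]
    ring

lemma dirichlet_two_pow_mul (m q : ℕ) (x : G2) :
    dirichlet (2 ^ m * q) x
      = (∑ j ∈ Finset.range q, walsh (2 ^ m * j) x) * dirichlet (2 ^ m) x := by
  induction q with
  | zero => simp [dirichlet]
  | succ q ih =>
    rw [dirichlet, mul_add_one, Finset.sum_range_add, ← dirichlet, ih, Finset.sum_range_succ,
      add_mul]
    congr 1
    rw [dirichlet, Finset.mul_sum]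
    exact Finset.sum_congr rfl fun r hr => walsh_two_pow_mul_add m q (Finset.mem_range.1 hr) x

lemma dirichlet_two_pow_succ_of_ne_zero {s : ℕ} {y : G2} (hys : y s ≠ 0) :
    dirichlet (2 ^ (s + 1)) y = 0 := by
  rw [dirichlet_two_pow]
  exact Finset.prod_eq_zero (Finset.self_mem_range_succ s) (by rw [rad_of_ne_zero hys]; ring)

lemma abs_dirichlet_le {s : ℕ} {y : G2} (hys : y s ≠ 0) (n : ℕ) :
    |dirichlet n y| ≤ 2 ^ (s + 1) := by
  set M := 2 ^ (s + 1)
  obtain ⟨q, r, hr, rfl⟩ : ∃ q r, r < M ∧ n = M * q + r :=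
    ⟨n / M, n % M, Nat.mod_lt n (by positivity), (Nat.div_add_mod n M).symm⟩
  rw [dirichlet, Finset.sum_range_add, ← dirichlet, dirichlet_two_pow_mul,
    dirichlet_two_pow_succ_of_ne_zero hys, mul_zero, zero_add]
  calc |∑ k ∈ Finset.range r, walsh (M * q + k) y|
      ≤ ∑ k ∈ Finset.range r, |walsh (M * q + k) y| := Finset.abs_sum_le_sum_abs _ _
    _ = r := by simp [abs_walsh]
    _ ≤ 2 ^ (s + 1) := by exact_mod_cast hr.le

end Walsh

section Measure

instance : muG.IsAddLeftInvariant := Measure.isAddLeftInvariant_addHaarMeasure _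

instance : IsProbabilityMeasure muG := ⟨Measure.addHaarMeasure_self⟩

lemma measurable_rad (k : ℕ) : Measurable (rad k) :=
  (Measurable.of_discrete (f := fun c : ZMod 2 => (-1 : ℝ) ^ c.val)).comp (measurable_pi_apply k)

lemma measurable_walsh (n : ℕ) : Measurable (walsh n) :=
  Finset.measurable_prod _ fun k _ => by
    split_ifs
    exacts [measurable_rad k, measurable_const]

lemma cyl_zero : cyl 0 = Set.univ := by
  simp [cyl]

lemma mem_cyl_succ {n : ℕ} {x : G2} : x ∈ cyl (n + 1) ↔ x ∈ cyl n ∧ x n = 0 := by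
  refine ⟨fun h => ⟨fun i hi => h i (by omega), h n (by omega)⟩, fun ⟨h, hn⟩ i hi => ?_⟩
  rcases Nat.lt_succ_iff_lt_or_eq.mp hi with hi | rfl
  exacts [h i hi, hn]

lemma measurableSet_cyl (n : ℕ) : MeasurableSet (cyl n) := by
  induction n with
  | zero => simp [cyl_zero]
  | succ n ih =>
    have : cyl (n + 1) = cyl n ∩ (fun x : G2 => x n) ⁻¹' {0} := by
      ext x; simp [mem_cyl_succ]
    rw [this]
    exact ih.inter (measurable_pi_apply n (measurableSet_singleton 0))

lemma muG_cyl_eq_two_mul_muG_cyl_succ (n : ℕ) : muG (cyl n) = 2 * muG (cyl (n + 1)) := by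
  set e : G2 := Pi.single n 1
  have htranslate : ∀ x, e + x ∈ cyl n ↔ x ∈ cyl n := fun x => by
    refine forall₂_congr fun i hi => ?_
    simp only [e, Pi.add_apply, Pi.single_eq_of_ne hi.ne, zero_add]
  have hen : ∀ x : G2, (e + x) n = 1 + x n := fun x => by simp [e]
  have hsplit : cyl n = cyl (n + 1) ∪ (fun x => e + x) ⁻¹' cyl (n + 1) := by
    ext x
    simp only [Set.mem_union, Set.mem_preimage, mem_cyl_succ, htranslate, hen, ← and_or_left]
    rcases zmod_two_eq_zero_or_one (x n) with h | h <;>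
      simp [h, show (1 : ZMod 2) + 1 = 0 from rfl]
  have hdisj : Disjoint (cyl (n + 1)) ((fun x => e + x) ⁻¹' cyl (n + 1)) := by
    refine Set.disjoint_left.2 fun x hx hex => ?_
    rw [Set.mem_preimage, mem_cyl_succ, hen, (mem_cyl_succ.1 hx).2] at hex
    exact one_ne_zero hex.2
  rw [hsplit, measure_union hdisj ((measurableSet_cyl _).preimage (measurable_const_add e)),
    measure_preimage_add, two_mul]

lemma muG_cyl (n : ℕ) : muG (cyl n) = (2 ^ n)⁻¹ := by
  induction n with
  | zero => simp [cyl_zero]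
  | succ n ih =>
    rw [muG_cyl_eq_two_mul_muG_cyl_succ] at ih
    rw [pow_succ, ENNReal.mul_inv (by simp) (by simp), ← ih, mul_comm, ← mul_assoc,
      ENNReal.inv_mul_cancel two_ne_zero ENNReal.ofNat_ne_top, one_mul]

end Measure

section PartialSums

lemma funS_eq_integral_mul_dirichlet {a : G2 → ℝ} (ha : Integrable a muG) (n : ℕ) (x : G2) :
    funS a n x = ∫ t, a t * dirichlet n (x + t) ∂muG := by
  have hint : ∀ k, Integrable (fun t => a t * walsh k t * walsh k x) muG := fun k =>
    (ha.mul_bdd (measurable_walsh k).aestronglyMeasurable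
      (ae_of_all _ fun t => (abs_walsh k t).le)).mul_const _
  simp only [funS, fhat, ← integral_mul_const]
  rw [← integral_finsetSum _ fun k _ => hint k]
  refine integral_congr_ae (ae_of_all _ fun t => ?_)
  simp only [dirichlet, walsh_add, Finset.mul_sum]
  exact Finset.sum_congr rfl fun k _ => by ring

lemma fhat_eq_zero_of_lt {a : G2 → ℝ} {N : ℕ} (hsupp : ∀ x, x ∉ cyl N → a x = 0)
    (hmean : ∫ x, a x ∂muG = 0) {k : ℕ} (hk : k < 2 ^ N) : fhat a k = 0 := by
  have h : ∀ t, a t * walsh k t = a t := fun t => by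
    by_cases ht : t ∈ cyl N
    · rw [walsh_eq_one_of_mem_cyl hk ht, mul_one]
    · rw [hsupp t ht, zero_mul]
  simp only [fhat, h, hmean]

lemma funS_eq_zero_of_le {a : G2 → ℝ} {N : ℕ} (hsupp : ∀ x, x ∉ cyl N → a x = 0)
    (hmean : ∫ x, a x ∂muG = 0) {n : ℕ} (hn : n ≤ 2 ^ N) (x : G2) : funS a n x = 0 :=
  Finset.sum_eq_zero fun k hk => by
    rw [fhat_eq_zero_of_lt hsupp hmean ((Finset.mem_range.1 hk).trans_le hn), zero_mul]

lemma abs_funS_le {a : G2 → ℝ} (ha : Integrable a muG) {N s : ℕ} (hsN : s < N)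
    (hsupp : ∀ t, t ∉ cyl N → a t = 0) {x : G2} (hxs : x s ≠ 0) (n : ℕ) :
    |funS a n x| ≤ 2 ^ (s + 1) * ∫ t, |a t| ∂muG := by
  rw [funS_eq_integral_mul_dirichlet ha, ← integral_const_mul, ← Real.norm_eq_abs]
  refine norm_integral_le_of_norm_le (ha.abs.const_mul _) (ae_of_all _ fun t => ?_)
  by_cases ht : t ∈ cyl N
  · rw [Real.norm_eq_abs, abs_mul, mul_comm]
    have hxts : (x + t) s ≠ 0 := by rwa [Pi.add_apply, ht s hsN, add_zero]
    gcongr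
    exact abs_dirichlet_le hxts n
  · simp [hsupp t ht]

lemma integral_abs_le_of_abs_le {a : G2 → ℝ} {N : ℕ} (hsupp : ∀ t, t ∉ cyl N → a t = 0)
    {C : ℝ} (hC : ∀ t, |a t| ≤ C) : ∫ t, |a t| ∂muG ≤ C * (2 ^ N)⁻¹ := by
  rw [← setIntegral_eq_integral_of_forall_compl_eq_zero (s := cyl N) fun t ht => by
    simp [hsupp t ht]]
  refine (le_abs_self _).trans ?_
  have := norm_setIntegral_le_of_norm_le_const (f := fun t => |a t|)
    (measure_lt_top muG (cyl N)) fun t _ => (abs_abs (a t)).trans_le (hC t)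
  simpa [measureReal_def, muG_cyl] using this

end PartialSums

section Atoms

structure IsHpAtom (p : ℝ) (N : ℕ) (a : G2 → ℝ) : Prop where
  measurable : Measurable a
  eq_zero_of_notMem : ∀ x, x ∉ cyl N → a x = 0
  abs_le : ∀ x, |a x| ≤ (2 : ℝ) ^ ((N : ℝ) / p)
  integral_eq_zero : ∫ x, a x ∂muG = 0

def weightedMaxPartialSum (p : ℝ) (a : G2 → ℝ) (x : G2) : ℝ≥0∞ :=
  ⨆ n : ℕ, (‖funS a n x‖₊ : ℝ≥0∞) / ENNReal.ofReal (((n : ℝ) + 1) ^ (1 / p - 1))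

variable {p : ℝ} {N : ℕ} {a : G2 → ℝ}

lemma IsHpAtom.integrable (ha : IsHpAtom p N a) : Integrable a muG :=
  (integrable_const _).mono' ha.measurable.aestronglyMeasurable (ae_of_all _ ha.abs_le)

lemma IsHpAtom.integral_abs_le (ha : IsHpAtom p N a) :
    ∫ t, |a t| ∂muG ≤ ((2 : ℝ) ^ N) ^ (1 / p - 1) := by
  have h2N : (0 : ℝ) < 2 ^ N := by positivity
  have : ((2 : ℝ) ^ N) ^ (1 / p - 1) = 2 ^ ((N : ℝ) / p) * (2 ^ N)⁻¹ := by
    rw [Real.rpow_sub h2N, Real.rpow_one, ← Real.rpow_natCast, ← Real.rpow_mul zero_le_two,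
      mul_one_div, div_eq_mul_inv]
  exact this ▸ integral_abs_le_of_abs_le ha.eq_zero_of_notMem ha.abs_le

lemma IsHpAtom.abs_funS_le_rpow (ha : IsHpAtom p N a) (hp : 0 < p) (hp1 : p ≤ 1) {s : ℕ}
    (hsN : s < N) {x : G2} (hxs : x s ≠ 0) (n : ℕ) :
    |funS a n x| ≤ 2 ^ (s + 1) * ((n : ℝ) + 1) ^ (1 / p - 1) := by
  by_cases hn : n ≤ 2 ^ N
  · rw [funS_eq_zero_of_le ha.eq_zero_of_notMem ha.integral_eq_zero hn, abs_zero]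
    positivity
  have hexp : 0 ≤ 1 / p - 1 := sub_nonneg.2 ((one_le_div hp).2 hp1)
  have hNn : (2 : ℝ) ^ N ≤ n + 1 := by exact_mod_cast (Nat.not_le.1 hn).le.trans n.le_succ
  calc |funS a n x| ≤ 2 ^ (s + 1) * ∫ t, |a t| ∂muG :=
        abs_funS_le ha.integrable hsN ha.eq_zero_of_notMem hxs n
    _ ≤ 2 ^ (s + 1) * ((2 : ℝ) ^ N) ^ (1 / p - 1) := by gcongr; exact ha.integral_abs_le
    _ ≤ 2 ^ (s + 1) * ((n : ℝ) + 1) ^ (1 / p - 1) := by gcongr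

lemma IsHpAtom.weightedMaxPartialSum_le (ha : IsHpAtom p N a) (hp : 0 < p) (hp1 : p ≤ 1) {s : ℕ}
    (hsN : s < N) {x : G2} (hxs : x s ≠ 0) : weightedMaxPartialSum p a x ≤ 2 ^ (s + 1) := by
  refine iSup_le fun n => ENNReal.div_le_of_le_mul ?_
  rw [← enorm_eq_nnnorm, Real.enorm_eq_ofReal_abs, ← ENNReal.ofReal_ofNat 2,
    ← ENNReal.ofReal_pow zero_le_two, ← ENNReal.ofReal_mul (by positivity)]
  exact ENNReal.ofReal_le_ofReal (ha.abs_funS_le_rpow hp hp1 hsN hxs n)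

lemma ne_zero_of_mem_cyl_diff_cyl_succ {s : ℕ} {x : G2} (hx : x ∈ cyl s \ cyl (s + 1)) :
    x s ≠ 0 :=
  fun hxs => hx.2 (mem_cyl_succ.2 ⟨hx.1, hxs⟩)

lemma compl_cyl_subset_iUnion (N : ℕ) : (cyl N)ᶜ ⊆ ⋃ s : Fin N, cyl s \ cyl (s + 1) := by
  intro x hx
  have hex : ∃ i, i < N ∧ x i ≠ 0 := by simpa [cyl] using hx
  obtain ⟨hsN, hxs⟩ := Nat.find_spec hex
  refine Set.mem_iUnion.2
    ⟨⟨Nat.find hex, hsN⟩, fun i hi => ?_, fun h => hxs (h _ (lt_add_one _))⟩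
  by_contra hxi
  exact Nat.find_min hex hi ⟨hi.trans hsN, hxi⟩

lemma IsHpAtom.setLIntegral_cyl_diff_cyl_succ_le (ha : IsHpAtom p N a) (hp : 0 < p)
    (hp1 : p ≤ 1) {s : ℕ} (hsN : s < N) :
    ∫⁻ x in cyl s \ cyl (s + 1), weightedMaxPartialSum p a x ^ p ∂muG
      ≤ 2 ^ p * (2 ^ p / 2) ^ s := by
  calc ∫⁻ x in cyl s \ cyl (s + 1), weightedMaxPartialSum p a x ^ p ∂muG
      ≤ ∫⁻ _ in cyl s \ cyl (s + 1), ((2 : ℝ≥0∞) ^ (s + 1)) ^ p ∂muG :=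
        setLIntegral_mono' ((measurableSet_cyl s).diff (measurableSet_cyl (s + 1))) fun x hx =>
          ENNReal.rpow_le_rpow
            (ha.weightedMaxPartialSum_le hp hp1 hsN (ne_zero_of_mem_cyl_diff_cyl_succ hx)) hp.le
    _ ≤ ((2 : ℝ≥0∞) ^ (s + 1)) ^ p * (2 ^ s)⁻¹ := by
        rw [setLIntegral_const, ← muG_cyl]
        gcongr
        exact Set.sdiff_subset
    _ = 2 ^ p * (2 ^ p / 2) ^ s := by
        have hpow : ((2 : ℝ≥0∞) ^ (s + 1)) ^ p = 2 ^ p * (2 ^ p) ^ s := by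
          rw [← ENNReal.rpow_natCast, ← ENNReal.rpow_mul, mul_comm, ENNReal.rpow_mul,
            ENNReal.rpow_natCast, pow_succ']
        rw [hpow, div_eq_mul_inv, mul_pow, ENNReal.inv_pow]
        ring

lemma IsHpAtom.setLIntegral_compl_cyl_le (ha : IsHpAtom p N a) (hp : 0 < p) (hp1 : p ≤ 1) :
    ∫⁻ x in (cyl N)ᶜ, weightedMaxPartialSum p a x ^ p ∂muG ≤ 2 ^ p * (1 - 2 ^ p / 2)⁻¹ :=
  calc ∫⁻ x in (cyl N)ᶜ, weightedMaxPartialSum p a x ^ p ∂muG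
      ≤ ∫⁻ x in ⋃ s : Fin N, cyl s \ cyl (s + 1), weightedMaxPartialSum p a x ^ p ∂muG :=
        lintegral_mono_set (compl_cyl_subset_iUnion N)
    _ ≤ ∑' s : Fin N, ∫⁻ x in cyl s \ cyl (s + 1), weightedMaxPartialSum p a x ^ p ∂muG :=
        lintegral_iUnion_le _ _
    _ ≤ ∑' s : Fin N, 2 ^ p * (2 ^ p / 2) ^ (s : ℕ) :=
        ENNReal.tsum_le_tsum fun s => ha.setLIntegral_cyl_diff_cyl_succ_le hp hp1 s.2
    _ ≤ ∑' s : ℕ, 2 ^ p * (2 ^ p / 2) ^ s :=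
        ENNReal.tsum_comp_le_tsum_of_injective Fin.val_injective _
    _ = 2 ^ p * (1 - 2 ^ p / 2)⁻¹ := by rw [ENNReal.tsum_mul_left, ENNReal.tsum_geometric]

end Atoms

lemma two_rpow_div_two_lt_one {p : ℝ} (hp1 : p < 1) : (2 : ℝ≥0∞) ^ p / 2 < 1 := by
  refine ENNReal.div_lt_of_lt_mul ?_
  rw [one_mul]
  simpa using ENNReal.rpow_lt_rpow_of_exponent_lt one_lt_two ENNReal.ofNat_ne_top hp1

theorem stmt9 (p : ℝ) (hp : 0 < p) (hp1 : p < 1) :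
    ∃ c : ℝ, 0 < c ∧ ∀ (N : ℕ) (a : G2 → ℝ), Measurable a →
      (∀ x : G2, x ∉ cyl N → a x = 0) →
      (∀ x : G2, |a x| ≤ (2 : ℝ) ^ ((N : ℝ) / p)) →
      (∫ x, a x ∂muG) = 0 →
      ∫⁻ x in (cyl N)ᶜ,
          (⨆ n : ℕ, (‖funS a n x‖₊ : ℝ≥0∞) / ENNReal.ofReal (((n : ℝ) + 1) ^ (1 / p - 1))) ^ p
          ∂muG ≤ ENNReal.ofReal c := by
  set C : ℝ≥0∞ := 2 ^ p * (1 - 2 ^ p / 2)⁻¹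
  have hC_ne_top : C ≠ ⊤ :=
    ENNReal.mul_ne_top (ENNReal.rpow_ne_top_of_nonneg hp.le ENNReal.ofNat_ne_top)
      (ENNReal.inv_ne_top.2 (tsub_pos_of_lt (two_rpow_div_two_lt_one hp1)).ne')
  have hC_ne_zero : C ≠ 0 :=
    mul_ne_zero (ENNReal.rpow_pos two_pos ENNReal.ofNat_ne_top).ne'
      (ENNReal.inv_ne_zero.2 (ENNReal.sub_ne_top ENNReal.one_ne_top))
  refine ⟨C.toReal, ENNReal.toReal_pos hC_ne_zero hC_ne_top, fun N a ha hsupp hbd hmean => ?_⟩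
  rw [ENNReal.ofReal_toReal hC_ne_top]
  exact IsHpAtom.setLIntegral_compl_cyl_le ⟨ha, hsupp, hbd, hmean⟩ hp hp1.le

end
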